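/- For a path h from a to b of length L with extra point c = b ± 1, let i_1 > i_2 > ... > i_N be the positions of the scoring (peak) vertices. Then i_1 + i_2 + ... + i_N = (1/2)(L ± (a-b)) + 2·wt(h), where the sign ± matches c = b ± 1 and wt is the slanted-coordinate weight. -/

import Mathlib

open Finset

namespace Melzer

/-- Height of the path after `i` steps, starting at `a`; `true` = NE step (+1),
`false` = SE step (-1). -/
def ht (a : ℤ) {L : ℕ} (s : Fin L → Bool) (i : ℕ) : ℤ :=
  a + ∑ j ∈ Finset.range i, (if h : j < L then (if s ⟨j, h⟩ then 1 else -1) else 0)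

/-- `s` encodes a path in `P^{p'}_{a,b}(L)`: all heights lie in `[1, p'-1]` and
the path ends at `b`. -/
def isPath (p' : ℕ) (a b : ℤ) {L : ℕ} (s : Fin L → Bool) : Prop :=
  (∀ i ∈ Finset.range (L + 1), 1 ≤ ht a s i ∧ ht a s i ≤ (p' : ℤ) - 1) ∧ ht a s L = b

instance decIsPath (p' : ℕ) (a b : ℤ) {L : ℕ} (s : Fin L → Bool) :
    Decidable (isPath p' a b s) := by
  unfold isPath; infer_instance

/-- Heights including the extra point `h_{L+1} = c`. -/
def htc (a : ℤ) {L : ℕ} (s : Fin L → Bool) (c : ℤ) (i : ℕ) : ℤ :=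
  if i ≤ L then ht a s i else c

/-- Regime-III weight: `i/2` at each straight vertex, `0` at peaks. -/
def wtIII (a : ℤ) {L : ℕ} (s : Fin L → Bool) (c : ℤ) : ℚ :=
  ∑ i ∈ Finset.Icc 1 L, if htc a s c (i + 1) = htc a s c (i - 1) then 0 else (i : ℚ) / 2

/-- Regime-II weight: `i/2` at each peak vertex, `0` at straight vertices. -/
def wtII (a : ℤ) {L : ℕ} (s : Fin L → Bool) (c : ℤ) : ℚ :=
  ∑ i ∈ Finset.Icc 1 L, if htc a s c (i + 1) = htc a s c (i - 1) then (i : ℚ) / 2 else 0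

/-- Slanted-coordinate weight: at a peak-down vertex the contribution is
`x = (i - (h_i - a))/2`, at a peak-up vertex it is `y = (i + (h_i - a))/2`. -/
def wtSl (a : ℤ) {L : ℕ} (s : Fin L → Bool) (c : ℤ) : ℚ :=
  ∑ i ∈ Finset.Icc 1 L,
    if htc a s c (i + 1) = htc a s c (i - 1) then
      (if htc a s c (i - 1) < htc a s c i then ((i : ℚ) - ((ht a s i - a : ℤ) : ℚ)) / 2
       else ((i : ℚ) + ((ht a s i - a : ℤ) : ℚ)) / 2)
    else 0

/-- `X^{p'}_L(a,b,c;q)`, the ABF (regime-III) finitised generating function. -/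
noncomputable def X (p' : ℕ) (a b c : ℤ) (L : ℕ) (q : ℝ) : ℝ :=
  ∑ s ∈ Finset.univ.filter (fun s : Fin L → Bool => isPath p' a b s),
    q ^ ((wtIII a s c : ℚ) : ℝ)

/-- `x^{p'}_L(a,b,c;q)`, the parafermion (regime-II) finitised generating function. -/
noncomputable def xPara (p' : ℕ) (a b c : ℤ) (L : ℕ) (q : ℝ) : ℝ :=
  ∑ s ∈ Finset.univ.filter (fun s : Fin L → Bool => isPath p' a b s),
    q ^ ((wtII a s c : ℚ) : ℝ)

/-- `χ^{1,p'}_{a,b,c}(L;q)`, generating function for the slanted-coordinate weight. -/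
noncomputable def chiP (p' : ℕ) (a b c : ℤ) (L : ℕ) (q : ℝ) : ℝ :=
  ∑ s ∈ Finset.univ.filter (fun s : Fin L → Bool => isPath p' a b s),
    q ^ ((wtSl a s c : ℚ) : ℝ)

/-- `χ^{p'-1,p'}_{a,b,c}(L;q) = q^{(1/4)(a-b)(a-c)} X^{p'}_L(a,b,c;q)`. -/
noncomputable def chiABF (p' : ℕ) (a b c : ℤ) (L : ℕ) (q : ℝ) : ℝ :=
  q ^ ((((a - b) * (a - c) : ℤ) : ℝ) / 4) * X p' a b c L q

/-- Extended direction sequence: index `0` is the pre-segment (NE iff `e = 1`),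
indices `1..L` are the path segments, index `L+1` is the post-segment (NE iff `f = 0`). -/
def dirsExt {L : ℕ} (s : Fin L → Bool) (e f : ℕ) (i : ℕ) : Bool :=
  if i = 0 then e == 1
  else if h : i - 1 < L then s ⟨i - 1, h⟩
  else f == 0

def runsAux : Bool → ℕ → List Bool → List ℕ
  | _, n, [] => [n]
  | d, n, x :: xs => if x = d then runsAux d (n + 1) xs else n :: runsAux x 1 xs

/-- Run lengths of a list of directions. -/
def runLengths : List Bool → List ℕ
  | [] => []
  | x :: xs => runsAux x 1 xs

/-- The `(e,f)`-striking sequence `(w_1, …, w_l)` of the path `s`. -/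
def strike {L : ℕ} (s : Fin L → Bool) (e f : ℕ) : List ℕ :=
  let r := runLengths (List.ofFn fun i : Fin (L + 2) => dirsExt s e f (i : ℕ))
  r.mapIdx fun i x => x - (if i = 0 then 1 else 0) - (if i = r.length - 1 then 1 else 0)

/-- `m^{(e,f)}(h) = L - l + 2` where `l` is the length of the striking sequence. -/
def mEF {L : ℕ} (s : Fin L → Bool) (e f : ℕ) : ℤ :=
  (L : ℤ) + 2 - (strike s e f).length

/-- The striking-sequence weight
`wt^{(e,f)}(h) = ∑_{i=2}^{l-1} (w_{i-1} + w_{i-3} + ⋯ + w_{1 + (i mod 2)})`. -/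
def wtEF {L : ℕ} (s : Fin L → Bool) (e f : ℕ) : ℕ :=
  ∑ i ∈ Finset.Icc 2 ((strike s e f).length - 1), ∑ j ∈ Finset.Icc 1 (i - 1),
    if j % 2 = (i - 1) % 2 then (strike s e f).getD (j - 1) 0 else 0

/-- `χ^{1,p'}_{a,b,e,f}(L,m;q)`, the restricted generating function. -/
noncomputable def chiRes (p' : ℕ) (a b : ℤ) (e f : ℕ) (L : ℕ) (m : ℤ) (q : ℝ) : ℝ :=
  ∑ s ∈ Finset.univ.filter
      (fun s : Fin L → Bool => isPath p' a b s ∧ mEF s e f = m),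
    q ^ ((wtEF s e f : ℕ) : ℝ)

/-- The Gaussian (q-binomial) polynomial, via the Pascal recurrence. -/
noncomputable def qbinom (q : ℝ) : ℕ → ℕ → ℝ
  | _, 0 => 1
  | 0, _ + 1 => 0
  | A + 1, B + 1 => qbinom q A B + q ^ (B + 1) * qbinom q A (B + 1)

/-- The `B`-transform on striking sequences:
`(w_1, w_2, …, w_{l-1}, w_l) ↦ (w_1, w_2+1, …, w_{l-1}+1, w_l)`. -/
def btransSeq (ws : List ℕ) : List ℕ :=
  ws.mapIdx fun i x => if i = 0 ∨ i = ws.length - 1 then x else x + 1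

/-- Particle insertion on striking sequences:
`(w_1, w_2, …, w_l) ↦ (0, 1, w_1+1, w_2, …, w_l)`. -/
def insertP : List ℕ → List ℕ
  | [] => []
  | w :: rest => 0 :: 1 :: (w + 1) :: rest

/-- A single particle move: in the extended direction sequence a window
`(x, !x, x, x)` (two scoring vertices followed by a non-scoring one) is replaced
by `(x, x, !x, x)` (a non-scoring vertex followed by two scoring ones). -/
def moveRel {L : ℕ} (e f : ℕ) (s s' : Fin L → Bool) : Prop :=
  ∃ j, j + 3 ≤ L + 1 ∧
    (∀ i, i ≠ j + 1 → i ≠ j + 2 → dirsExt s e f i = dirsExt s' e f i) ∧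
    dirsExt s e f (j + 1) = !(dirsExt s e f j) ∧
    dirsExt s e f (j + 2) = dirsExt s e f j ∧
    dirsExt s e f (j + 3) = dirsExt s e f j ∧
    dirsExt s' e f (j + 1) = dirsExt s e f j ∧
    dirsExt s' e f (j + 2) = !(dirsExt s e f j)

/-! At a peak vertex `i` the slanted coordinates satisfy `x + y = i` and `y - x = h_i - a`, so
`i = 2 (its weight) + d_i (h_i - a)` with `d_i = h_i - h_{i-1}`. The signed heights
`d_i (h_i - a)` of the peaks telescope: `d_{i+1} (h_i - a)` grows by `1` across a straight vertex
and by `1 - 2 d_i (h_i - a)` across a peak, so twice their sum is `L + d_{L+1} (a - b)`,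
and `d_{L+1} = c - b = ±1`. -/

lemma step_mul_height_sub_eq (x y z o : ℤ) (hxy : y - x = 1 ∨ y - x = -1)
    (hyz : z - y = 1 ∨ z - y = -1) :
    (z - y) * (y - o) - (y - x) * (x - o)
      = 1 - 2 * (if z = x then (y - x) * (y - o) else 0) := by
  have hx : x = y - (y - x) := by ring
  have hz : z = y + (z - y) := by ring
  rcases hxy with hxy | hxy <;> rcases hyz with hyz | hyz <;> rw [hxy] at hx <;>
    rw [hyz] at hz <;> subst hx hz <;> split_ifs <;> omega

lemma two_mul_sum_peak_step_mul_height (g : ℕ → ℤ) (n : ℕ)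
    (hstep : ∀ i < n + 1, g (i + 1) - g i = 1 ∨ g (i + 1) - g i = -1) :
    2 * ∑ i ∈ Icc 1 n, (if g (i + 1) = g (i - 1) then (g i - g (i - 1)) * (g i - g 0) else 0)
      = n + (g (n + 1) - g n) * (g 0 - g n) := by
  induction n with
  | zero => simp
  | succ n ih =>
    have hvertex := step_mul_height_sub_eq (g n) (g (n + 1)) (g (n + 2)) (g 0)
      (hstep n (by omega)) (hstep (n + 1) (by omega))
    rw [sum_Icc_succ_top (by omega), mul_add, ih fun i hi => hstep i (by omega)]
    simp only [Nat.add_sub_cancel] at hvertex ⊢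
    push_cast
    linarith

lemma ht_succ (a : ℤ) {L : ℕ} (s : Fin L → Bool) {i : ℕ} (hi : i < L) :
    ht a s (i + 1) = ht a s i + if s ⟨i, hi⟩ then 1 else -1 := by
  simp [ht, sum_range_succ, hi, add_assoc]

lemma ht_zero (a : ℤ) {L : ℕ} (s : Fin L → Bool) : ht a s 0 = a := by
  simp [ht]

lemma htc_of_le (a c : ℤ) {L : ℕ} (s : Fin L → Bool) {i : ℕ} (hi : i ≤ L) :
    htc a s c i = ht a s i := if_pos hi

lemma htc_zero (a c : ℤ) {L : ℕ} (s : Fin L → Bool) : htc a s c 0 = a := by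
  rw [htc_of_le a c s (Nat.zero_le L), ht_zero]

lemma htc_succ_length (a c : ℤ) {L : ℕ} (s : Fin L → Bool) : htc a s c (L + 1) = c := by
  simp [htc]

lemma htc_step {a b c ε : ℤ} {L : ℕ} {s : Fin L → Bool} (hb : ht a s L = b)
    (hε : ε = 1 ∨ ε = -1) (hc : c = b + ε) :
    ∀ i < L + 1, htc a s c (i + 1) - htc a s c i = 1 ∨ htc a s c (i + 1) - htc a s c i = -1 := by
  intro i hi
  rcases Nat.lt_succ_iff_lt_or_eq.mp hi with hi | rfl
  · rw [htc_of_le a c s hi, htc_of_le a c s hi.le, ht_succ a s hi]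
    cases s ⟨i, hi⟩ <;> simp
  · rw [htc_succ_length, htc_of_le a c s le_rfl, hb, hc]
    omega

lemma peak_position_eq (a c : ℤ) {L : ℕ} (s : Fin L → Bool) {i : ℕ} (hi : i ∈ Icc 1 L)
    (hd : htc a s c i - htc a s c (i - 1) = 1 ∨ htc a s c i - htc a s c (i - 1) = -1) :
    (if htc a s c (i + 1) = htc a s c (i - 1) then (i : ℚ) else 0)
      = 2 * (if htc a s c (i + 1) = htc a s c (i - 1) then
          (if htc a s c (i - 1) < htc a s c i then ((i : ℚ) - ((ht a s i - a : ℤ) : ℚ)) / 2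
           else ((i : ℚ) + ((ht a s i - a : ℤ) : ℚ)) / 2)
          else 0)
        + (((if htc a s c (i + 1) = htc a s c (i - 1) then
            (htc a s c i - htc a s c (i - 1)) * (htc a s c i - a) else 0 : ℤ)) : ℚ) := by
  have hhi : htc a s c i = ht a s i := htc_of_le a c s (mem_Icc.mp hi).2
  split_ifs
  · rcases hd with hd | hd <;> rw [hd, hhi] <;> [(push_cast; ring); omega]
  · rcases hd with hd | hd <;> rw [hd, hhi] <;> [omega; (push_cast; ring)]
  · simp

theorem statement3_general (p' L : ℕ) (a b c ε : ℤ) (s : Fin L → Bool)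
    (hpath : isPath p' a b s)
    (hε : ε = 1 ∨ ε = -1) (hc : c = b + ε) :
    (∑ i ∈ Finset.Icc 1 L,
        if htc a s c (i + 1) = htc a s c (i - 1) then (i : ℚ) else 0)
      = ((L : ℚ) + (ε : ℚ) * ((a - b : ℤ) : ℚ)) / 2 + 2 * wtSl a s c := by
  have hstep := htc_step hpath.2 hε hc
  have hpeaks := two_mul_sum_peak_step_mul_height (htc a s c) L hstep
  rw [htc_succ_length, htc_of_le a c s le_rfl, hpath.2,
    htc_zero, show c - b = ε by omega] at hpeaks
  have hposition : ∀ i ∈ Icc 1 L, _ := fun i hi => by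
    have hd := hstep (i - 1) (by have := mem_Icc.mp hi; omega)
    rw [Nat.sub_add_cancel (mem_Icc.mp hi).1] at hd
    exact peak_position_eq a c s hi hd
  rw [sum_congr rfl hposition, sum_add_distrib, ← mul_sum, ← Int.cast_sum, wtSl]
  have hpeaksℚ := congrArg (Int.cast : ℤ → ℚ) hpeaks
  push_cast at hpeaksℚ ⊢
  linarith

/-- The sum of the positions of the scoring (peak) vertices equals
`(1/2)(L ± (a-b)) + 2·wt(h)`, the sign matching `c = b ± 1`. -/
theorem statement3 (p' L : ℕ) (a b c ε : ℤ) (s : Fin L → Bool)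
    (hpath : isPath p' a b s)
    (hε : ε = 1 ∨ ε = -1) (hc : c = b + ε) (hc1 : 1 ≤ c) (hc2 : c ≤ (p' : ℤ) - 1) :
    (∑ i ∈ Finset.Icc 1 L,
        if htc a s c (i + 1) = htc a s c (i - 1) then (i : ℚ) else 0)
      = ((L : ℚ) + (ε : ℚ) * ((a - b : ℤ) : ℚ)) / 2 + 2 * wtSl a s c :=
  statement3_general p' L a b c ε s hpath hε hc

end Melzer
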